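/- The Tutte polynomial M ↦ T_M(x,y) ∈ Z[x,y] is a valuation under matroid subdivisions: T_M(x,y) = Σ_i T_{M_i}(x,y) − Σ_{i<j} T_{M_{ij}}(x,y) + ⋯ for any matroid subdivision {M_1,...,M_m} of M. -/

import Mathlib

open Finset
open scoped Pointwise

/-- The indicator vector `e_B ∈ ℝⁿ` of a subset `B ⊆ [n]`. -/
def indVec (n : ℕ) (B : Finset (Fin n)) : Fin n → ℝ := fun i => if i ∈ B then 1 else 0

/-- A collection of subsets of `[n]` is the collection of bases of a matroid
(possibly the empty matroid) iff it satisfies the basis exchange axiom. -/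
def IsBases {n : ℕ} (𝓑 : Finset (Finset (Fin n))) : Prop :=
  ∀ B₁ ∈ 𝓑, ∀ B₂ ∈ 𝓑, ∀ b₁ ∈ B₁ \ B₂, ∃ b₂ ∈ B₂ \ B₁, insert b₂ (B₁.erase b₁) ∈ 𝓑

/-- The matroid (basis) polytope: convex hull of indicator vectors of the bases. -/
def polytope {n : ℕ} (𝓑 : Finset (Finset (Fin n))) : Set (Fin n → ℝ) :=
  convexHull ℝ (indVec n '' ↑𝓑)

/-- The rank of a subset `A` in the matroid with bases `𝓑`:
the maximal size of an intersection of `A` with a basis. -/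
def mrank {n : ℕ} (𝓑 : Finset (Finset (Fin n))) (A : Finset (Fin n)) : ℕ :=
  𝓑.sup fun B => (A ∩ B).card

/-- A subdivision of a polytope `P` into polytopes `Ps i`: their union is `P`,
their vertices are vertices of `P`, and each pairwise intersection is a proper
(exposed) face of both pieces. -/
def IsSubdivision {n m : ℕ} (P : Set (Fin n → ℝ)) (Ps : Fin m → Set (Fin n → ℝ)) : Prop :=
  (⋃ i, Ps i) = P ∧
  (∀ i, Set.extremePoints ℝ (Ps i) ⊆ Set.extremePoints ℝ P) ∧
  ∀ i j, i ≠ j →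
    IsExposed ℝ (Ps i) (Ps i ∩ Ps j) ∧ IsExposed ℝ (Ps j) (Ps i ∩ Ps j) ∧
    Ps i ∩ Ps j ≠ Ps i ∧ Ps i ∩ Ps j ≠ Ps j

/-- A matroid subdivision of the matroid `𝓑` into the matroids `𝓜 i`. -/
def IsMatroidSubdivision {n m : ℕ} (𝓑 : Finset (Finset (Fin n)))
    (𝓜 : Fin m → Finset (Finset (Fin n))) : Prop :=
  IsBases 𝓑 ∧ (∀ i, IsBases (𝓜 i)) ∧ IsSubdivision (polytope 𝓑) fun i => polytope (𝓜 i)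

open Classical in
/-- For `A ⊆ [m]`, the matroid `M_A` whose polytope is `⋂_{a ∈ A} Q(M_a)`:
its bases are the bases of `M` whose indicator vector lies in every `Q(M_a)`, `a ∈ A`.
For `A = ∅` this is `M` itself. -/
noncomputable def interMatroid {n m : ℕ} (𝓑 : Finset (Finset (Fin n)))
    (𝓜 : Fin m → Finset (Finset (Fin n))) (A : Finset (Fin m)) : Finset (Finset (Fin n)) :=
  𝓑.filter fun B => ∀ a ∈ A, indVec n B ∈ polytope (𝓜 a)

/-- `f` is a valuation under matroid subdivisions:
`∑_{A ⊆ [m]} (-1)^{|A|} f(M_A) = 0` for every matroid subdivision. -/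
def IsValuation {n : ℕ} {G : Type*} [AddCommGroup G] (f : Finset (Finset (Fin n)) → G) : Prop :=
  ∀ (m : ℕ) (𝓑 : Finset (Finset (Fin n))) (𝓜 : Fin m → Finset (Finset (Fin n))),
    IsMatroidSubdivision 𝓑 𝓜 →
    ∑ A : Finset (Fin m), (-1 : ℤ) ^ A.card • f (interMatroid 𝓑 𝓜 A) = 0

/-- The Tutte polynomial `T_M(x,y) = ∑_{A ⊆ [n]} (x-1)^{r(M)-r(A)} (y-1)^{|A|-r(A)}`,
as a polynomial in two variables `X 0 = x`, `X 1 = y`, with `T_∅ = 0`. -/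
noncomputable def tutte {n : ℕ} (𝓑 : Finset (Finset (Fin n))) : MvPolynomial (Fin 2) ℤ :=
  if 𝓑 = ∅ then 0 else
    ∑ A : Finset (Fin n),
      (MvPolynomial.X 0 - 1) ^ (mrank 𝓑 Finset.univ - mrank 𝓑 A) *
        (MvPolynomial.X 1 - 1) ^ (A.card - mrank 𝓑 A)

/-!
For a matroid `M` of rank `d`, telescoping `k ↦ (x - 1)^(d - k) (y - 1)^(|A| - k)` gives
`T_M = ∑_A ∑_{r ≤ |A|} [r ≤ r_M(A)] Δ_A(r)` with increments `Δ_A(r)` that depend only on `d`.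
The condition `r ≤ r_M(A)` says that the polytope `Q(M)` meets the half-space
`∑_{i ∈ A} xᵢ ≥ r`, so each coefficient is the Euler characteristic of a compact convex set.
The pieces `M_S` of a subdivision of `M` all have rank `d` and polytope `Q(M) ∩ ⋂_{a ∈ S} Q(Mₐ)`
(their vertices are vertices of `Q(M)`). Pointwise, the alternating sum of the indicators of
these polytopes vanishes by inclusion–exclusion over the pieces containing the point, and the
Euler characteristic, being additive on compact convex sets, turns this into the claim.
-/

open Filter Topology

section EulerCharacteristic

open Classical

variable {ι G : Type*} [Fintype ι] [AddCommGroup G]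

lemma eventually_nhdsLT_mem_Icc_iff {α : Type*} [LinearOrder α] [TopologicalSpace α]
    [OrderTopology α] (a b t : α) : ∀ᶠ s in 𝓝[<] t, s ∈ Set.Icc a b ↔ t ∈ Set.Ioc a b := by
  by_cases hat : a < t
  · by_cases htb : t ≤ b
    · filter_upwards [Ioo_mem_nhdsLT hat] with s hs
      exact iff_of_true ⟨hs.1.le, hs.2.le.trans htb⟩ ⟨hat, htb⟩
    · filter_upwards [nhdsWithin_le_nhds (Ioi_mem_nhds (not_le.1 htb))] with s hs
      exact iff_of_false (fun h => not_le.2 hs h.2) fun h => htb h.2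
  · filter_upwards [self_mem_nhdsWithin] with s hs
    exact iff_of_false (fun h => hat (h.1.trans_lt hs)) fun h => hat h.1

lemma eventually_nhdsLT_mem_iff {K : Set ℝ} (hconv : Convex ℝ K) (hcomp : IsCompact K) (t : ℝ) :
    ∀ᶠ s in 𝓝[<] t, s ∈ K ↔ t ∈ K ∧ t ≠ sInf K := by
  rcases K.eq_empty_or_nonempty with rfl | hne
  · simp
  obtain ⟨a, b, hab, rfl⟩ : ∃ a b, a ≤ b ∧ K = Set.Icc a b :=
    ⟨_, _, csInf_le hcomp.bddBelow (hcomp.sSup_mem hne),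
      eq_Icc_of_connected_compact (hconv.isConnected hne) hcomp⟩
  filter_upwards [eventually_nhdsLT_mem_Icc_iff a b t] with s hs
  rw [hs, csInf_Icc hab, Set.mem_Ioc, Set.mem_Icc, lt_iff_le_and_ne, ne_comm]
  tauto

/-- The jump `𝟙_K(t) - 𝟙_K(t⁻)` of the indicator of a compact interval is `1` exactly at its left
endpoint; summing the jumps of `∑ cᵢ 𝟙_{Kᵢ} = 0` over all left endpoints gives the claim. -/
theorem sum_ite_nonempty_eq_zero_real (c : ι → G) (K : ι → Set ℝ)
    (hconv : ∀ i, Convex ℝ (K i)) (hcomp : ∀ i, IsCompact (K i))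
    (h : ∀ t, ∑ i, (if t ∈ K i then c i else 0) = 0) :
    ∑ i, (if (K i).Nonempty then c i else 0) = 0 := by
  have hleft : ∀ t, ∑ i, (if t ∈ K i ∧ t ≠ sInf (K i) then c i else 0) = 0 := by
    intro t
    obtain ⟨s, hs⟩ :=
      (eventually_all.2 fun i => eventually_nhdsLT_mem_iff (hconv i) (hcomp i) t).exists
    simpa only [hs] using h s
  have hjump : ∀ i, ∑ t ∈ univ.image fun j => sInf (K j),
      ((if t ∈ K i then c i else 0) - if t ∈ K i ∧ t ≠ sInf (K i) then c i else 0) =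
        if (K i).Nonempty then c i else 0 := by
    intro i
    have hinf : sInf (K i) ∈ K i ↔ (K i).Nonempty := ⟨fun h => ⟨_, h⟩, (hcomp i).sInf_mem⟩
    have hterm : ∀ t, ((if t ∈ K i then c i else 0) - if t ∈ K i ∧ t ≠ sInf (K i) then c i else 0)
        = if t = sInf (K i) then (if (K i).Nonempty then c i else 0) else 0 := by
      intro t
      by_cases ht : t = sInf (K i)
      · subst ht
        simp [hinf]
      · simp [ht]
    rw [sum_congr rfl fun t _ => hterm t, sum_ite_eq', if_pos (mem_image_of_mem _ (mem_univ i))]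
  calc ∑ i, (if (K i).Nonempty then c i else 0)
      = ∑ t ∈ univ.image fun j => sInf (K j), (∑ i, (if t ∈ K i then c i else 0) -
          ∑ i, if t ∈ K i ∧ t ≠ sInf (K i) then c i else 0) := by
        simp only [← hjump, ← sum_sub_distrib]
        exact sum_comm
    _ = 0 := by simp [h, hleft]

section Fiber

variable {N : ℕ} {K : Set (Fin (N + 1) → ℝ)}

lemma Convex.consFiber (hK : Convex ℝ K) (x : Fin N → ℝ) :
    Convex ℝ {t : ℝ | (Fin.cons t x : Fin (N + 1) → ℝ) ∈ K} := by
  intro t₁ h₁ t₂ h₂ a b ha hb hab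
  show (Fin.cons (a • t₁ + b • t₂) x : Fin (N + 1) → ℝ) ∈ K
  convert hK h₁ h₂ ha hb hab using 1
  ext i
  refine Fin.cases ?_ (fun j => ?_) i <;> simp [← add_mul, hab]

lemma IsCompact.consFiber (hK : IsCompact K) (x : Fin N → ℝ) :
    IsCompact {t : ℝ | (Fin.cons t x : Fin (N + 1) → ℝ) ∈ K} :=
  (hK.image (continuous_apply 0)).of_isClosed_subset
    (hK.isClosed.preimage (continuous_id.finCons continuous_const))
    fun t ht => ⟨_, ht, by simp⟩

lemma consFiber_nonempty_iff (x : Fin N → ℝ) :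
    {t : ℝ | (Fin.cons t x : Fin (N + 1) → ℝ) ∈ K}.Nonempty ↔ x ∈ Fin.tail '' K := by
  constructor
  · rintro ⟨t, ht⟩
    exact ⟨_, ht, by simp⟩
  · rintro ⟨y, hy, rfl⟩
    exact ⟨y 0, by rwa [Set.mem_ofPred_eq, Fin.cons_self_tail]⟩

end Fiber

/-- The Euler characteristic `χ K = [K nonempty]` of compact convex sets is additive: it factors
through the group generated by their indicator functions. -/
theorem sum_ite_nonempty_eq_zero (N : ℕ) (c : ι → G) (K : ι → Set (Fin N → ℝ))
    (hconv : ∀ i, Convex ℝ (K i)) (hcomp : ∀ i, IsCompact (K i))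
    (h : ∀ x, ∑ i, (if x ∈ K i then c i else 0) = 0) :
    ∑ i, (if (K i).Nonempty then c i else 0) = 0 := by
  induction N with
  | zero =>
    have hK : ∀ i, (K i).Nonempty ↔ default ∈ K i := fun i =>
      ⟨fun ⟨x, hx⟩ => Subsingleton.elim x default ▸ hx, fun hx => ⟨_, hx⟩⟩
    simpa only [hK] using h default
  | succ N ih =>
    have htail : IsLinearMap ℝ (Fin.tail : (Fin (N + 1) → ℝ) → Fin N → ℝ) :=
      ⟨fun _ _ => rfl, fun _ _ => rfl⟩
    simp only [← Set.image_nonempty (f := Fin.tail)]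
    refine ih (fun i => Fin.tail '' K i) (fun i => (hconv i).is_linear_image htail)
      (fun i => (hcomp i).image (continuous_pi fun _ => continuous_apply _)) fun x => ?_
    simp only [← consFiber_nonempty_iff]
    exact sum_ite_nonempty_eq_zero_real c _ (fun i => (hconv i).consFiber x)
      (fun i => (hcomp i).consFiber x) fun t => h _

end EulerCharacteristic

open Classical in
lemma sum_ite_mem_inter_biInter_eq_zero {α ι G : Type*} [Fintype ι] [AddCommGroup G]
    {P : Set α} {Q : ι → Set α} (hPQ : P ⊆ ⋃ i, Q i) (x : α) (g : G) :
    ∑ S : Finset ι, (if x ∈ P ∩ ⋂ i ∈ S, Q i then (-1 : ℤ) ^ #S • g else 0) = 0 := by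
  by_cases hx : x ∈ P
  · set T := univ.filter fun i => x ∈ Q i
    have hT : T.Nonempty := by
      obtain ⟨i, hi⟩ := Set.mem_iUnion.1 (hPQ hx)
      exact ⟨i, mem_filter.2 ⟨mem_univ i, hi⟩⟩
    have hmem : ∀ S : Finset ι, x ∈ P ∩ ⋂ i ∈ S, Q i ↔ S ∈ T.powerset := fun S => by
      simp [hx, T, subset_iff]
    simp only [hmem, sum_ite_mem, univ_inter, ← sum_smul,
      sum_powerset_neg_one_pow_card_of_nonempty hT, zero_smul]
  · simp [hx]

lemma isExtreme_biInter_of_mem {𝕜 E ι : Type*} [Semiring 𝕜] [PartialOrder 𝕜] [AddCommMonoid E]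
    [SMul 𝕜 E] {Q : ι → Set E} (hQ : ∀ i j, i ≠ j → IsExtreme 𝕜 (Q i) (Q i ∩ Q j))
    {S : Finset ι} {i : ι} (hi : i ∈ S) : IsExtreme 𝕜 (Q i) (⋂ j ∈ S, Q j) := by
  have hS : ⋂ j ∈ S, Q j = ⋂ j : S, (Q i ∩ Q j) := by
    ext x
    simp only [Set.mem_iInter, Set.mem_inter_iff, Subtype.forall]
    exact ⟨fun h j hj => ⟨h i hi, h j hj⟩, fun h j hj => (h j hj).2⟩
  have : Nonempty S := ⟨⟨i, hi⟩⟩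
  rw [hS]
  refine isExtreme_iInter fun ⟨j, _⟩ => ?_
  by_cases hij : i = j
  · subst hij
    rw [Set.inter_self]
  · exact hQ i j hij

variable {n m : ℕ}

lemma IsBases.card_eq {𝓑 : Finset (Finset (Fin n))} (h𝓑 : IsBases 𝓑) {B₁ B₂ : Finset (Fin n)}
    (hB₁ : B₁ ∈ 𝓑) (hB₂ : B₂ ∈ 𝓑) : #B₁ = #B₂ := by
  have hexch : Matroid.ExchangeProperty fun X : Set (Fin n) => ∃ B ∈ 𝓑, ↑B = X := by
    rintro _ _ ⟨B, hB, rfl⟩ ⟨B', hB', rfl⟩ a ha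
    obtain ⟨b, hb, hbB⟩ := h𝓑 B hB B' hB' a (by simpa using ha)
    exact ⟨b, by simpa using hb, _, hbB, by simp⟩
  have := hexch.encard_isBase_eq ⟨B₁, hB₁, rfl⟩ ⟨B₂, hB₂, rfl⟩
  simpa only [Set.encard_coe_eq_coe_finsetCard, Nat.cast_inj] using this

lemma isCompact_polytope (𝓒 : Finset (Finset (Fin n))) : IsCompact (polytope 𝓒) :=
  ((Set.toFinite _).image _).isCompact_convexHull (𝕜 := ℝ)

lemma sum_indVec (A B : Finset (Fin n)) : ∑ i ∈ A, indVec n B i = #(A ∩ B) := by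
  simp [indVec]

def sumHalfSpace (A : Finset (Fin n)) (r : ℕ) : Set (Fin n → ℝ) := {x | (r : ℝ) ≤ ∑ i ∈ A, x i}

lemma convex_sumHalfSpace (A : Finset (Fin n)) (r : ℕ) : Convex ℝ (sumHalfSpace A r) :=
  convex_halfSpace_ge ⟨fun _ _ => sum_add_distrib, fun c x => (mul_sum A x c).symm⟩ _

lemma isClosed_sumHalfSpace (A : Finset (Fin n)) (r : ℕ) : IsClosed (sumHalfSpace A r) :=
  isClosed_le continuous_const (continuous_finsetSum _ fun i _ => continuous_apply i)

lemma exists_le_card_inter_iff (𝓒 : Finset (Finset (Fin n))) (A : Finset (Fin n)) (r : ℕ) :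
    (∃ B ∈ 𝓒, r ≤ #(A ∩ B)) ↔ (polytope 𝓒 ∩ sumHalfSpace A r).Nonempty := by
  constructor
  · rintro ⟨B, hB, hr⟩
    refine ⟨indVec n B, subset_convexHull ℝ _ ⟨B, hB, rfl⟩, ?_⟩
    simpa [sumHalfSpace, sum_indVec] using hr
  · rintro ⟨x, hx, hxr⟩
    let l : (Fin n → ℝ) →ₗ[ℝ] ℝ := ∑ i ∈ A, LinearMap.proj i
    have hl : ∀ y, l y = ∑ i ∈ A, y i := fun y => by simp [l]
    obtain ⟨_, ⟨B, hB, rfl⟩, hle⟩ :=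
      (l.convexOn convex_univ).exists_ge_of_mem_convexHull (Set.subset_univ _) hx
    rw [hl, hl, sum_indVec] at hle
    exact ⟨B, hB, by exact_mod_cast (show (r : ℝ) ≤ ∑ i ∈ A, x i from hxr).trans hle⟩

lemma IsSubdivision.extremePoints_inter_biInter_subset {P : Set (Fin n → ℝ)}
    {Q : Fin m → Set (Fin n → ℝ)} (h : IsSubdivision P Q) (S : Finset (Fin m)) :
    Set.extremePoints ℝ (P ∩ ⋂ a ∈ S, Q a) ⊆ Set.extremePoints ℝ P := by
  obtain ⟨hunion, hext, hface⟩ := h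
  rcases S.eq_empty_or_nonempty with rfl | ⟨a, ha⟩
  · simp
  have hQP : ⋂ b ∈ S, Q b ⊆ P :=
    (Set.biInter_subset_of_mem ha).trans (hunion ▸ Set.subset_iUnion Q a)
  rw [Set.inter_eq_right.2 hQP]
  exact (isExtreme_biInter_of_mem (fun i j hij => (hface i j hij).1.isExtreme) ha
    |>.extremePoints_subset_extremePoints).trans (hext a)

variable {𝓑 : Finset (Finset (Fin n))} {𝓜 : Fin m → Finset (Finset (Fin n))}

open Classical in
/-- The vertices of `Q(M) ∩ ⋂_{a ∈ S} Q(Mₐ)` are vertices of `Q(M)`, so by Krein–Milman it is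
the convex hull of the bases of `M` it contains. -/
lemma polytope_interMatroid (h : IsSubdivision (polytope 𝓑) fun i => polytope (𝓜 i))
    (S : Finset (Fin m)) :
    polytope (interMatroid 𝓑 𝓜 S) = polytope 𝓑 ∩ ⋂ a ∈ S, polytope (𝓜 a) := by
  have hconv : Convex ℝ (polytope 𝓑 ∩ ⋂ a ∈ S, polytope (𝓜 a)) :=
    (convex_convexHull ℝ _).inter (convex_iInter₂ fun _ _ => convex_convexHull ℝ _)
  refine subset_antisymm (convexHull_min ?_ hconv) ?_
  · rintro _ ⟨B, hB, rfl⟩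
    obtain ⟨hB𝓑, hB𝓜⟩ := mem_filter.1 hB
    exact ⟨subset_convexHull ℝ _ ⟨B, hB𝓑, rfl⟩, Set.mem_iInter₂.2 hB𝓜⟩
  have hcomp : IsCompact (polytope 𝓑 ∩ ⋂ a ∈ S, polytope (𝓜 a)) :=
    (isCompact_polytope 𝓑).inter_right
      (isClosed_biInter fun a _ => (isCompact_polytope (𝓜 a)).isClosed)
  have hext : Set.extremePoints ℝ (polytope 𝓑 ∩ ⋂ a ∈ S, polytope (𝓜 a)) ⊆
      indVec n '' ↑(interMatroid 𝓑 𝓜 S) := by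
    intro z hz
    obtain ⟨B, hB, rfl⟩ :=
      extremePoints_convexHull_subset (h.extremePoints_inter_biInter_subset S hz)
    exact ⟨B, mem_filter.2 ⟨hB, Set.mem_iInter₂.1 (extremePoints_subset hz).2⟩, rfl⟩
  calc polytope 𝓑 ∩ ⋂ a ∈ S, polytope (𝓜 a)
      = closure (convexHull ℝ (Set.extremePoints ℝ (polytope 𝓑 ∩ ⋂ a ∈ S, polytope (𝓜 a)))) :=
        (closure_convexHull_extremePoints hcomp hconv).symm
    _ ⊆ closure (polytope (interMatroid 𝓑 𝓜 S)) := closure_mono (convexHull_mono hext)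
    _ = polytope (interMatroid 𝓑 𝓜 S) := (isCompact_polytope _).isClosed.closure_eq

open Classical in
lemma IsSubdivision.sum_ite_nonempty_polytope_interMatroid_inter {G : Type*} [AddCommGroup G]
    (h : IsSubdivision (polytope 𝓑) fun i => polytope (𝓜 i)) {C : Set (Fin n → ℝ)}
    (hCconv : Convex ℝ C) (hCclosed : IsClosed C) (g : G) :
    ∑ S : Finset (Fin m), (if (polytope (interMatroid 𝓑 𝓜 S) ∩ C).Nonempty then
      (-1 : ℤ) ^ #S • g else 0) = 0 := by
  refine sum_ite_nonempty_eq_zero n _ _ (fun S => (convex_convexHull ℝ _).inter hCconv)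
    (fun S => (isCompact_polytope _).inter_right hCclosed) fun x => ?_
  simp only [polytope_interMatroid h, Set.inter_right_comm _ _ C]
  convert sum_ite_mem_inter_biInter_eq_zero (Set.inter_subset_left.trans h.1.ge) x g

section Increments

variable {G : Type*} [AddCommGroup G]

def increments (f : ℕ → G) : ℕ → G
  | 0 => f 0
  | r + 1 => f (r + 1) - f r

lemma sum_range_succ_increments (f : ℕ → G) (k : ℕ) :
    ∑ r ∈ range (k + 1), increments f r = f k := by
  induction k with
  | zero => simp [increments]
  | succ k ih => rw [sum_range_succ, ih, increments, add_sub_cancel]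

lemma sum_range_ite_le_increments (f : ℕ → G) {k a : ℕ} (hka : k ≤ a) :
    ∑ r ∈ range (a + 1), (if r ≤ k then increments f r else 0) = f k := by
  rw [← sum_filter, ← sum_range_succ_increments f k]
  congr 1
  ext r
  simp only [mem_filter, mem_range]
  omega

end Increments

noncomputable def tutteTerm (d a k : ℕ) : MvPolynomial (Fin 2) ℤ :=
  (MvPolynomial.X 0 - 1) ^ (d - k) * (MvPolynomial.X 1 - 1) ^ (a - k)

lemma mrank_univ_of_card_eq {𝓒 : Finset (Finset (Fin n))} (hne : 𝓒.Nonempty) {d : ℕ}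
    (hd : ∀ B ∈ 𝓒, #B = d) : mrank 𝓒 univ = d := by
  simp only [mrank, univ_inter]
  exact (sup_congr rfl hd).trans (sup_const hne d)

lemma le_mrank_iff {𝓒 : Finset (Finset (Fin n))} (hne : 𝓒.Nonempty) (A : Finset (Fin n))
    (r : ℕ) : r ≤ mrank 𝓒 A ↔ ∃ B ∈ 𝓒, r ≤ #(A ∩ B) := by
  rw [mrank, ← sup'_eq_sup hne, le_sup'_iff]

lemma mrank_le_card (𝓒 : Finset (Finset (Fin n))) (A : Finset (Fin n)) : mrank 𝓒 A ≤ #A :=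
  Finset.sup_le fun _ _ => card_le_card inter_subset_left

open Classical in
lemma tutte_eq_sum_ite_exists {𝓒 : Finset (Finset (Fin n))} {d : ℕ} (hd : ∀ B ∈ 𝓒, #B = d) :
    tutte 𝓒 = ∑ A : Finset (Fin n), ∑ r ∈ range (#A + 1),
      if ∃ B ∈ 𝓒, r ≤ #(A ∩ B) then increments (tutteTerm d #A) r else 0 := by
  rcases 𝓒.eq_empty_or_nonempty with rfl | hne
  · simp [tutte]
  rw [tutte, if_neg hne.ne_empty, mrank_univ_of_card_eq hne hd]
  refine sum_congr rfl fun A _ => ?_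
  simp only [← le_mrank_iff hne]
  exact (sum_range_ite_le_increments (tutteTerm d #A) (mrank_le_card 𝓒 A)).symm

open Classical in
lemma tutte_eq_sum_ite_nonempty {𝓒 : Finset (Finset (Fin n))} {d : ℕ} (hd : ∀ B ∈ 𝓒, #B = d) :
    tutte 𝓒 = ∑ A : Finset (Fin n), ∑ r ∈ range (#A + 1),
      if (polytope 𝓒 ∩ sumHalfSpace A r).Nonempty then increments (tutteTerm d #A) r else 0 := by
  simp only [tutte_eq_sum_ite_exists hd, exists_le_card_inter_iff]

/-- The Tutte polynomial is a valuation under matroid subdivisions. -/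
theorem statement_18 (n : ℕ) :
    IsValuation fun 𝓑 : Finset (Finset (Fin n)) => tutte 𝓑 := by
  classical
  rintro m 𝓑 𝓜 ⟨h𝓑, -, hsub⟩
  obtain ⟨d, hd⟩ : ∃ d, ∀ B ∈ 𝓑, #B = d := by
    rcases 𝓑.eq_empty_or_nonempty with rfl | ⟨B₀, hB₀⟩
    · exact ⟨0, by simp⟩
    · exact ⟨#B₀, fun B hB => h𝓑.card_eq hB hB₀⟩
  have hdS : ∀ S, ∀ B ∈ interMatroid 𝓑 𝓜 S, #B = d := fun S B hB => hd B (mem_filter.1 hB).1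
  calc ∑ S : Finset (Fin m), (-1 : ℤ) ^ #S • tutte (interMatroid 𝓑 𝓜 S)
      = ∑ A : Finset (Fin n), ∑ r ∈ range (#A + 1), ∑ S : Finset (Fin m),
          if (polytope (interMatroid 𝓑 𝓜 S) ∩ sumHalfSpace A r).Nonempty then
            (-1 : ℤ) ^ #S • increments (tutteTerm d #A) r else 0 := by
        simp only [tutte_eq_sum_ite_nonempty (hdS _), smul_sum, smul_ite, smul_zero]
        rw [sum_comm]
        exact sum_congr rfl fun A _ => sum_comm
    _ = 0 := sum_eq_zero fun A _ => sum_eq_zero fun r _ =>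
        hsub.sum_ite_nonempty_polytope_interMatroid_inter (convex_sumHalfSpace A r)
          (isClosed_sumHalfSpace A r) _
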